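/- Let G be a non-degenerate finite poc set over Σ and let S, T ⊆ Σ be forward-closed G-coherent sets. Then every u ∈ ⟨S;G⟩ satisfies Δ(u, ⟨T;G⟩) ≤ |T ∖ S|, where Δ(u, K) = min_{v ∈ K} |u ∖ v|. -/

import Mathlib

universe u v

structure PCS (α : Type*) where
  star : α → α
  zero : α
  star_star : ∀ a, star (star a) = a
  star_ne_self : ∀ a, star a ≠ a

variable {α : Type*}

/-- A pointed complemented relation (PCR) over the PCS `P`. -/
def IsPCR (P : PCS α) (G : Set (α × α)) : Prop :=
  (∀ a, (P.zero, a) ∈ G) ∧ ∀ a b, (a, b) ∈ G ↔ (P.star b, P.star a) ∈ G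

/-- `a ≤_G b`: the reflexive-transitive closure of the relation `G`. -/
def pcrLe (G : Set (α × α)) (a b : α) : Prop :=
  Relation.ReflTransGen (fun x y => (x, y) ∈ G) a b

/-- A set `S` is `G`-coherent if no `a, b ∈ S` satisfy `a ≤_G b*`. -/
def Coherent (P : PCS α) (G : Set (α × α)) (S : Set α) : Prop :=
  ∀ a ∈ S, ∀ b ∈ S, ¬ pcrLe G a (P.star b)

/-- Forward closure `↑S = {b | ∃ a ∈ S, a ≤_G b}`. -/
def upClosure (G : Set (α × α)) (S : Set α) : Set α :=
  {b | ∃ a ∈ S, pcrLe G a b}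

/-- Maximal `G`-coherent subsets; the members of the dual space `G°`. -/
def MaxCoherent (P : PCS α) (G : Set (α × α)) (S : Set α) : Prop :=
  Coherent P G S ∧ ∀ T, Coherent P G T → S ⊆ T → S = T

/-- `G` is non-degenerate: no `a` satisfies both `a ≤_G a*` and `a* ≤_G a`. -/
def Nondegenerate (P : PCS α) (G : Set (α × α)) : Prop :=
  ∀ a, ¬ (pcrLe G a (P.star a) ∧ pcrLe G (P.star a) a)

/-- A complete `*`-selection: exactly one of `a`, `a*` belongs to `S`, for each `a`. -/
def CompleteSel (P : PCS α) (S : Set α) : Prop :=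
  ∀ a, Xor' (a ∈ S) (P.star a ∈ S)

/-- The half-space `⟨S;G⟩ = {u ∈ G° : S ⊆ u}`. -/
def halfspace (P : PCS α) (G : Set (α × α)) (S : Set α) : Set (Set α) :=
  {u | MaxCoherent P G u ∧ S ⊆ u}

/-- Coherent projection `coh_G(T) = ↑T ∖ (↑T)*`. -/
def cohProj (P : PCS α) (G : Set (α × α)) (T : Set α) : Set α :=
  upClosure G T \ (P.star '' upClosure G T)

/-- Morphisms of PCRs. -/
def IsPCRHom {β : Type*} (P : PCS α) (Q : PCS β) (G : Set (α × α)) (H : Set (β × β))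
    (f : α → β) : Prop :=
  f P.zero = Q.zero ∧ (∀ a, f (P.star a) = Q.star (f a)) ∧
    ∀ a b, (a, b) ∈ G → pcrLe H (f a) (f b)

/-- A poc set: a PCR whose induced relation `≤_G` is antisymmetric and whose only
negligible element is `0`. -/
def IsPocSet (P : PCS α) (G : Set (α × α)) : Prop :=
  IsPCR P G ∧ (∀ a b, pcrLe G a b → pcrLe G b a → a = b) ∧
    ∀ a, pcrLe G a (P.star a) → a = P.zero

/-!
Extend `T ∪ (u ∖ T*)` to a maximal coherent set `v`. This set is coherent because `T` is
forward-closed and `u` is coherent, and `v ⊇ T`. Any `a ∈ u ∖ v` lies in `T*`, say `a = t*`,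
and `t ∉ u` by coherence of `u`; so `a ↦ a*` injects `u ∖ v` into `T ∖ u ⊆ T ∖ S`.
-/

section

variable {P : PCS α} {G : Set (α × α)}

theorem PCS.star_injective (P : PCS α) : Function.Injective P.star :=
  Function.LeftInverse.injective P.star_star

theorem IsPCR.pcrLe_star (hG : IsPCR P G) {a b : α} (h : pcrLe G a b) :
    pcrLe G (P.star b) (P.star a) := by
  induction h with
  | refl => exact Relation.ReflTransGen.refl
  | tail _ hbc ih => exact Relation.ReflTransGen.head ((hG.2 _ _).mp hbc) ih

theorem mem_of_upClosure_subset {T : Set α} (hT : upClosure G T ⊆ T) {a b : α}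
    (ha : a ∈ T) (hab : pcrLe G a b) : b ∈ T :=
  hT ⟨a, ha, hab⟩

theorem Coherent.union_diff_star_image (hG : IsPCR P G) {T u : Set α}
    (hT : Coherent P G T) (hTup : upClosure G T ⊆ T) (hu : Coherent P G u) :
    Coherent P G (T ∪ (u \ P.star '' T)) := by
  have mem_star_image {a : α} (h : P.star a ∈ T) : a ∈ P.star '' T :=
    ⟨P.star a, h, P.star_star a⟩
  rintro a (haT | ⟨hau, haT⟩) b (hbT | ⟨hbu, hbT⟩) hab
  · exact hT a haT b hbT hab
  · exact hbT (mem_star_image (mem_of_upClosure_subset hTup haT hab))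
  · have hba : pcrLe G b (P.star a) := by simpa only [P.star_star] using hG.pcrLe_star hab
    exact haT (mem_star_image (mem_of_upClosure_subset hTup hbT hba))
  · exact hu a hau b hbu hab

theorem Coherent.exists_maxCoherent_superset [Finite α] {w : Set α} (hw : Coherent P G w) :
    ∃ v, MaxCoherent P G v ∧ w ⊆ v := by
  obtain ⟨v, hv, hvmax⟩ := Set.Finite.exists_maximalFor id {x | Coherent P G x ∧ w ⊆ x}
    (Set.toFinite _) ⟨w, hw, subset_rfl⟩
  exact ⟨v, ⟨hv.1, fun X hX hvX => hvX.antisymm (hvmax ⟨hX, hv.2.trans hvX⟩ hvX)⟩, hv.2⟩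

theorem Coherent.diff_subset_star_image_diff {T u v : Set α} (hu : Coherent P G u)
    (hv : T ∪ (u \ P.star '' T) ⊆ v) : u \ v ⊆ P.star '' (T \ u) := by
  rintro a ⟨hau, hav⟩
  obtain ⟨t, htT, rfl⟩ : a ∈ P.star '' T := by
    by_contra h
    exact hav (hv (Or.inr ⟨hau, h⟩))
  refine ⟨t, ⟨htT, fun htu => ?_⟩, rfl⟩
  exact hu t htu (P.star t) hau (by rw [P.star_star]; exact Relation.ReflTransGen.refl)

end

theorem stmt10_general [Finite α] (P : PCS α) (G : Set (α × α)) (hG : IsPocSet P G)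
    (S T : Set α)
    (hT : Coherent P G T) (hTup : upClosure G T = T)
    (u : Set α) (hu : u ∈ halfspace P G S) :
    ∃ v ∈ halfspace P G T, (u \ v).ncard ≤ (T \ S).ncard := by
  obtain ⟨⟨hucoh, -⟩, hSu⟩ := hu
  obtain ⟨v, hvmax, hwv⟩ :=
    (hT.union_diff_star_image hG.1 hTup.le hucoh).exists_maxCoherent_superset
  refine ⟨v, ⟨hvmax, Set.subset_union_left.trans hwv⟩, ?_⟩
  calc (u \ v).ncard ≤ (P.star '' (T \ u)).ncard :=
        Set.ncard_le_ncard (hucoh.diff_subset_star_image_diff hwv) (Set.toFinite _)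
    _ = (T \ u).ncard := Set.ncard_image_of_injective _ P.star_injective
    _ ≤ (T \ S).ncard := Set.ncard_le_ncard (Set.sdiff_subset_sdiff_right hSu) (Set.toFinite _)

/-- Divergence bound: every `u ∈ ⟨S;G⟩` is within Hamming distance `|T ∖ S|`
of `⟨T;G⟩`. -/
theorem stmt10 [Finite α] (P : PCS α) (G : Set (α × α)) (hG : IsPocSet P G)
    (S T : Set α) (hS : Coherent P G S) (hSup : upClosure G S = S)
    (hT : Coherent P G T) (hTup : upClosure G T = T)
    (u : Set α) (hu : u ∈ halfspace P G S) :
    ∃ v ∈ halfspace P G T, (u \ v).ncard ≤ (T \ S).ncard :=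
  stmt10_general P G hG S T hT hTup u hu
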